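/- A polynomial p ∈ ℂ[z,w] satisfies p(z,w) ≠ 0 for all |z| ≤ 1, |w| ≤ 1 if and only if both of the following hold: p(z,w) ≠ 0 for all |z| = 1, |w| ≤ 1, and p(z,w) ≠ 0 for all |z| ≤ 1, |w| = 1. -/

import Mathlib

open MvPolynomial

/-!
For `w` in the closed unit disk let `m(w)` and `M(w)` be the minima of `|p(·, w)|` over the closed
unit disk and over the unit circle. Both depend continuously on `w`, and `M > 0` by the condition on
`|z| = 1`. If `p(·, w)` has no zero in the closed disk, the minimum modulus principle gives
`m(w) = M(w)`; otherwise `m(w) = 0`. Hence `m - M / 2` never vanishes on the connected disk, while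
it is positive at `w = 1` by the condition on `|w| = 1`, and negative wherever `p` has a zero in the
bidisk; the intermediate value theorem excludes such a zero.
-/

open Metric Set

theorem Complex.le_norm_of_forall_mem_frontier_le_norm {E : Type*} [NormedAddCommGroup E]
    [NormedSpace ℂ E] [Nontrivial E] {f : E → ℂ} {U : Set E} (hU : Bornology.IsBounded U)
    (hd : DiffContOnCl ℂ f U) (hne : ∀ z ∈ closure U, f z ≠ 0) {C : ℝ}
    (hC : ∀ z ∈ frontier U, C ≤ ‖f z‖) {z : E} (hz : z ∈ closure U) : C ≤ ‖f z‖ := by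
  rcases le_or_gt C 0 with hC₀ | hC₀
  · exact hC₀.trans (norm_nonneg _)
  have hinv : ‖(f z)⁻¹‖ ≤ C⁻¹ :=
    Complex.norm_le_of_forall_mem_frontier_norm_le hU (hd.inv hne)
      (fun w hw => by simpa only [Pi.inv_apply, norm_inv] using inv_anti₀ hC₀ (hC w hw)) hz
  rw [norm_inv] at hinv
  exact (inv_le_inv₀ (norm_pos_iff.2 (hne z hz)) hC₀).1 hinv

theorem sInf_norm_image_le {X E : Type*} [SeminormedAddGroup E] (f : X → E) {K : Set X} {x : X}
    (hx : x ∈ K) : sInf ((‖f ·‖) '' K) ≤ ‖f x‖ :=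
  csInf_le ⟨0, by rintro _ ⟨y, -, rfl⟩; exact norm_nonneg _⟩ (mem_image_of_mem _ hx)

section ZeroFreeFamily

variable {c : ℂ} {r : ℝ}

theorem sInf_norm_image_closedBall_eq_sphere {f : ℂ → ℂ} (hr : 0 < r)
    (hd : DiffContOnCl ℂ f (ball c r)) (hne : ∀ z ∈ closedBall c r, f z ≠ 0) :
    sInf ((‖f ·‖) '' closedBall c r) = sInf ((‖f ·‖) '' sphere c r) := by
  have hsphere : (sphere c r).Nonempty := NormedSpace.sphere_nonempty.2 hr.le
  apply le_antisymm
  · exact csInf_le_csInf ⟨0, by rintro _ ⟨y, -, rfl⟩; exact norm_nonneg _⟩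
      (hsphere.image _) (image_mono sphere_subset_closedBall)
  · refine le_csInf ((nonempty_closedBall.2 hr.le).image _) ?_
    rintro _ ⟨z, hz, rfl⟩
    rw [← closure_ball c hr.ne'] at hz hne
    refine Complex.le_norm_of_forall_mem_frontier_le_norm isBounded_ball hd hne (fun w hw => ?_) hz
    rw [frontier_ball c hr.ne'] at hw
    exact sInf_norm_image_le f hw

variable {Y : Type*} [TopologicalSpace Y] {F : Y → ℂ → ℂ} {W : Set Y}

theorem ne_zero_on_closedBall_of_isPreconnected (hr : 0 < r) (hF : Continuous ↿F)
    (hd : ∀ y ∈ W, DifferentiableOn ℂ (F y) (ball c r)) (hW : IsPreconnected W)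
    (hsphere : ∀ y ∈ W, ∀ z ∈ sphere c r, F y z ≠ 0) {y₀ : Y} (hy₀ : y₀ ∈ W)
    (h₀ : ∀ z ∈ closedBall c r, F y₀ z ≠ 0) {y : Y} (hy : y ∈ W) {z : ℂ}
    (hz : z ∈ closedBall c r) : F y z ≠ 0 := by
  set m : Y → ℝ := fun y => sInf ((‖F y ·‖) '' closedBall c r)
  set M : Y → ℝ := fun y => sInf ((‖F y ·‖) '' sphere c r)
  have hM_pos : ∀ y ∈ W, 0 < M y := by
    intro y hy
    obtain ⟨z, hz, hMz⟩ := (isCompact_sphere c r).exists_sInf_image_eq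
      (NormedSpace.sphere_nonempty.2 hr.le) (hF.uncurry_left y).norm.continuousOn
    simp only [M, hMz]
    exact norm_pos_iff.2 (hsphere y hy z hz)
  have hm_eq : ∀ y ∈ W, (∀ z ∈ closedBall c r, F y z ≠ 0) → m y = M y := fun y hy hne =>
    sInf_norm_image_closedBall_eq_sphere hr
      (.mk_ball (hd y hy) (hF.uncurry_left y).continuousOn) hne
  have hm_cont : Continuous m := (isCompact_closedBall c r).continuous_sInf hF.norm
  have hM_cont : Continuous M := (isCompact_sphere c r).continuous_sInf hF.norm
  intro hFz
  have hmy : m y ≤ M y / 2 := calc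
    m y ≤ ‖F y z‖ := sInf_norm_image_le (F y) hz
    _ = 0 := norm_eq_zero.2 hFz
    _ ≤ M y / 2 := (half_pos (hM_pos y hy)).le
  have hmy₀ : M y₀ / 2 ≤ m y₀ := by
    rw [hm_eq y₀ hy₀ h₀]
    linarith [hM_pos y₀ hy₀]
  obtain ⟨y', hy', hmy'⟩ := hW.intermediate_value₂ hy hy₀ hm_cont.continuousOn
    (hM_cont.continuousOn.div_const 2) hmy hmy₀
  by_cases hzero : ∃ z' ∈ closedBall c r, F y' z' = 0
  · obtain ⟨z', hz', hFz'⟩ := hzero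
    have : m y' ≤ 0 := (sInf_norm_image_le (F y') hz').trans_eq (norm_eq_zero.2 hFz')
    linarith [hM_pos y' hy']
  · linarith [hm_eq y' hy' fun z hz h => hzero ⟨z, hz, h⟩, hM_pos y' hy']

end ZeroFreeFamily

theorem continuous_uncurry_eval_vecCons (p : MvPolynomial (Fin 2) ℂ) :
    Continuous ↿(fun w z : ℂ => eval ![z, w] p) :=
  (continuous_eval p).comp (by fun_prop)

theorem differentiable_eval_vecCons (p : MvPolynomial (Fin 2) ℂ) (w : ℂ) :
    Differentiable ℂ (fun z : ℂ => eval ![z, w] p) :=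
  (differentiableOn_univ.1 (AnalyticOnNhd.eval_mvPolynomial p).differentiableOn).comp
    (differentiable_pi.2 (Fin.forall_fin_two.2 ⟨differentiable_id, differentiable_const w⟩))

/-- **Fejér–Riesz paper, stability criterion (Section 3.3).**
A polynomial `p ∈ ℂ[z,w]` is stable (nonzero on the closed bidisk `|z| ≤ 1`, `|w| ≤ 1`)
if and only if it is nonzero both for `|z| = 1`, `|w| ≤ 1` and for `|z| ≤ 1`, `|w| = 1`. -/
theorem fejer_riesz_stability_criterion (p : MvPolynomial (Fin 2) ℂ) :
    (∀ z w : ℂ, ‖z‖ ≤ 1 → ‖w‖ ≤ 1 → eval ![z, w] p ≠ 0) ↔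
      ((∀ z w : ℂ, ‖z‖ = 1 → ‖w‖ ≤ 1 → eval ![z, w] p ≠ 0) ∧
       (∀ z w : ℂ, ‖z‖ ≤ 1 → ‖w‖ = 1 → eval ![z, w] p ≠ 0)) := by
  refine ⟨fun h => ⟨fun z w hz hw => h z w hz.le hw, fun z w hz hw => h z w hz hw.le⟩,
    fun ⟨h_sphere, h_one⟩ z w hz hw => ?_⟩
  refine ne_zero_on_closedBall_of_isPreconnected (F := fun w z => eval ![z, w] p)
    (c := 0) (W := closedBall 0 1) (y₀ := 1) one_pos (continuous_uncurry_eval_vecCons p)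
    (fun w _ => (differentiable_eval_vecCons p w).differentiableOn)
    (convex_closedBall 0 1).isPreconnected ?_ (by simp) ?_ (by simpa using hw) (by simpa using hz)
  · intro w hw z hz
    exact h_sphere z w (by simpa using hz) (by simpa using hw)
  · intro z hz
    exact h_one z 1 (by simpa using hz) (by simp)
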